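/- For every real a > 0 and all integers k, m ≥ 2, one has |(1/2^{m+1}) Σ_{j=1}^k ψ^(m)((j+a)/2)| ≤ 4·m!/(a+1)^{m-1}. -/

import Mathlib

/-!
Since `log Γ` is convex, `ψ` is increasing; together with `ψ(x + 1) = ψ(x) + 1/x` this forces
`ψ(y + N) - ψ(x + N) → 0`, hence `ψ(y) - ψ(x) = ∑ₙ ((x + n)⁻¹ - (y + n)⁻¹)`. Differentiating
termwise gives `ψ^(m)(x) = (-1)^(m+1) m! ∑ₙ (x + n)^-(m+1)`, and telescoping against
`1/((x + n)(x + n + 1))` bounds `∑ₙ (x + n)^-p` by `x^-p + x^-(p-1)`. So each summand of the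
theorem is at most `2^(m+2) m! (j + a)^-m`, and `∑ⱼ (j + a)^-m ≤ 2 (a + 1)^-(m-1)`.
-/

/-- The digamma function `ψ(x) = Γ'(x)/Γ(x)`, as the derivative of `log ∘ Γ`. -/
noncomputable def digamma (x : ℝ) : ℝ :=
  deriv (fun y => Real.log (Real.Gamma y)) x

open Filter Topology Finset
open scoped Nat

lemma hasDerivAt_inv_add_pow (p : ℕ) {c y : ℝ} (h : y + c ≠ 0) :
    HasDerivAt (fun z => ((z + c) ^ p)⁻¹) (-p * ((y + c) ^ (p + 1))⁻¹) y := by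
  refine ((((hasDerivAt_id y).add_const c).pow p).inv (pow_ne_zero p h)).congr_deriv ?_
  rcases p with _ | p
  · simp
  · simp only [id, Nat.add_sub_cancel, mul_one, Pi.pow_apply]
    field_simp
    ring

-- The Hurwitz zeta value `ζ(p, x)` for real `x > 0`; Mathlib's `hurwitzZeta` only sees `x mod 1`.
noncomputable def hurwitzSeries (p : ℕ) (x : ℝ) : ℝ := ∑' n : ℕ, ((x + n) ^ p)⁻¹

section hurwitzSeries

open Set

variable {p : ℕ} {x : ℝ}

lemma summable_inv_add_nat_pow (hx : 0 < x) (hp : 2 ≤ p) :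
    Summable fun n : ℕ => ((x + n) ^ p)⁻¹ := by
  have hp' : (1 : ℝ) < p := by exact_mod_cast hp
  refine ((Real.summable_one_div_nat_add_rpow x p).mpr hp').congr fun n => ?_
  rw [abs_of_pos (by positivity), Real.rpow_natCast, one_div, add_comm]

lemma hurwitzSeries_nonneg (hx : 0 < x) : 0 ≤ hurwitzSeries p x :=
  tsum_nonneg fun n => by positivity

lemma sum_range_le_hurwitzSeries (hx : 0 < x) (hp : 2 ≤ p) (N : ℕ) :
    ∑ n ∈ range N, ((x + n) ^ p)⁻¹ ≤ hurwitzSeries p x :=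
  (summable_inv_add_nat_pow hx hp).sum_le_tsum _ fun n _ => by positivity

lemma inv_add_succ_pow_le (hx : 0 < x) (q n : ℕ) :
    ((x + (n + 1 : ℕ)) ^ (q + 2))⁻¹ ≤ (x ^ q)⁻¹ * ((x + n)⁻¹ - (x + (n + 1 : ℕ))⁻¹) := by
  have hn : 0 < x + n := by positivity
  rw [Nat.cast_succ, ← add_assoc, inv_sub_inv hn.ne' (by positivity), add_sub_cancel_left,
    one_div, ← mul_inv]
  gcongr
  calc x ^ q * ((x + n) * (x + n + 1)) ≤ (x + n + 1) ^ q * ((x + n + 1) * (x + n + 1)) := by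
        gcongr ?_ ^ _ * (?_ * _) <;> linarith
    _ = (x + n + 1) ^ (q + 2) := by ring

lemma hurwitzSeries_le (hx : 0 < x) (hp : 2 ≤ p) :
    hurwitzSeries p x ≤ (x ^ p)⁻¹ + (x ^ (p - 1))⁻¹ := by
  obtain ⟨q, rfl⟩ : ∃ q, p = q + 2 := ⟨p - 2, by omega⟩
  have htail : ∑' n : ℕ, ((x + (n + 1 : ℕ)) ^ (q + 2))⁻¹ ≤ (x ^ (q + 1))⁻¹ := by
    refine Real.tsum_le_of_sum_range_le (fun n => by positivity) fun N => ?_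
    calc ∑ n ∈ range N, ((x + (n + 1 : ℕ)) ^ (q + 2))⁻¹
        ≤ ∑ n ∈ range N, (x ^ q)⁻¹ * ((x + n)⁻¹ - (x + (n + 1 : ℕ))⁻¹) :=
          sum_le_sum fun n _ => inv_add_succ_pow_le hx q n
      _ = (x ^ q)⁻¹ * (x⁻¹ - (x + N)⁻¹) := by
          rw [← mul_sum, sum_range_sub' (fun n : ℕ => (x + n)⁻¹), Nat.cast_zero, add_zero]
      _ ≤ (x ^ (q + 1))⁻¹ := by
          rw [pow_succ, mul_inv]
          gcongr
          exact sub_le_self _ (by positivity)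
  rw [hurwitzSeries, (summable_inv_add_nat_pow hx hp).tsum_eq_zero_add, Nat.cast_zero, add_zero]
  simpa using htail

lemma hurwitzSeries_le_of_one_le (hx : 1 ≤ x) (hp : 2 ≤ p) :
    hurwitzSeries p x ≤ 2 * (x ^ (p - 1))⁻¹ := by
  have hxp : (x ^ p)⁻¹ ≤ (x ^ (p - 1))⁻¹ :=
    inv_anti₀ (by positivity) (pow_le_pow_right₀ hx (Nat.sub_le p 1))
  linarith [hurwitzSeries_le (zero_lt_one.trans_le hx) hp]

lemma hasDerivAt_hurwitzSeries (hx : 0 < x) (hp : 2 ≤ p) :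
    HasDerivAt (hurwitzSeries p) (-p * hurwitzSeries (p + 1) x) x := by
  have hx2 : 0 < x / 2 := by positivity
  have hxt : x ∈ Ioi (x / 2) := show x / 2 < x by linarith
  rw [hurwitzSeries, ← tsum_mul_left]
  refine hasDerivAt_tsum_of_isPreconnected (g := fun (n : ℕ) (y : ℝ) => ((y + n) ^ p)⁻¹)
    (g' := fun (n : ℕ) (y : ℝ) => -p * ((y + n) ^ (p + 1))⁻¹)
    ((summable_inv_add_nat_pow hx2 (p := p + 1) (by omega)).mul_left (p : ℝ)) isOpen_Ioi
    isPreconnected_Ioi (fun n y hy => ?_) (fun n y hy => ?_) hxt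
    (summable_inv_add_nat_pow hx hp) hxt
  all_goals have hy : x / 2 < y := hy
  · exact hasDerivAt_inv_add_pow p (by linarith [n.cast_nonneg (α := ℝ)])
  · rw [norm_mul, norm_neg, Real.norm_natCast, norm_inv, norm_pow,
      Real.norm_of_nonneg (by linarith [n.cast_nonneg (α := ℝ)])]
    gcongr

end hurwitzSeries

section digamma

open Set

variable {x y : ℝ}

lemma differentiableAt_log_Gamma (hx : 0 < x) :
    DifferentiableAt ℝ (fun y => Real.log (Real.Gamma y)) x :=
  (Real.differentiableAt_Gamma fun m => by linarith [m.cast_nonneg (α := ℝ)]).log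
    (Real.Gamma_pos_of_pos hx).ne'

lemma digamma_add_one (hx : 0 < x) : digamma (x + 1) = digamma x + x⁻¹ := by
  have hrec : (fun y => Real.log (Real.Gamma (y + 1))) =ᶠ[𝓝 x]
      fun y => Real.log (Real.Gamma y) + Real.log y := by
    filter_upwards [Ioi_mem_nhds hx] with y (hy : 0 < y)
    rw [Real.Gamma_add_one hy.ne', Real.log_mul hy.ne' (Real.Gamma_pos_of_pos hy).ne', add_comm]
  rw [digamma, ← deriv_comp_add_const, hrec.deriv_eq]
  exact ((differentiableAt_log_Gamma hx).hasDerivAt.add (Real.hasDerivAt_log hx.ne')).deriv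

lemma digamma_add_nat (hx : 0 < x) (N : ℕ) :
    digamma (x + N) = digamma x + ∑ n ∈ range N, (x + n)⁻¹ := by
  induction N with
  | zero => simp
  | succ N ih =>
    rw [Nat.cast_succ, ← add_assoc, digamma_add_one (by positivity), ih, sum_range_succ, add_assoc]

lemma monotoneOn_digamma : MonotoneOn digamma (Ioi 0) :=
  Real.convexOn_log_Gamma.monotoneOn_deriv fun _ hx => differentiableAt_log_Gamma hx

lemma tendsto_digamma_add_nat_sub (hx : 0 < x) (hxy : x ≤ y) :
    Tendsto (fun N : ℕ => digamma (y + N) - digamma (x + N)) atTop (𝓝 0) := by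
  have hy : 0 < y := hx.trans_le hxy
  set K := ⌈y - x⌉₊
  have hupper : Tendsto (fun N : ℕ => ∑ i ∈ range K, (x + N + i)⁻¹) atTop (𝓝 0) := by
    rw [← sum_const_zero (s := range K)]
    refine tendsto_finsetSum _ fun i _ => tendsto_inv_atTop_zero.comp ?_
    exact tendsto_atTop_add_const_right _ _
      (tendsto_atTop_add_const_left _ _ tendsto_natCast_atTop_atTop)
  refine tendsto_of_tendsto_of_tendsto_of_le_of_le tendsto_const_nhds hupper
    (fun N => sub_nonneg.2 <| monotoneOn_digamma (show 0 < x + N by positivity)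
      (show 0 < y + N by positivity) (by linarith)) fun N => ?_
  have hxN : 0 < x + N := by positivity
  rw [← add_sub_cancel_left (digamma (x + N)) (∑ i ∈ range K, _), ← digamma_add_nat hxN]
  refine sub_le_sub_right (monotoneOn_digamma (show 0 < y + N by positivity)
    (show 0 < x + N + K by positivity) ?_) _
  linarith [Nat.le_ceil (y - x)]

lemma hasSum_digamma_sub (hx : 0 < x) (hxy : x ≤ y) :
    HasSum (fun n : ℕ => (x + n)⁻¹ - (y + n)⁻¹) (digamma y - digamma x) := by
  refine (hasSum_iff_tendsto_nat_of_nonneg (fun n => sub_nonneg.2 ?_) _).2 ?_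
  · gcongr
  · have hsum (N : ℕ) : ∑ n ∈ range N, ((x + n)⁻¹ - (y + n)⁻¹)
        = digamma y - digamma x - (digamma (y + N) - digamma (x + N)) := by
      rw [digamma_add_nat hx, digamma_add_nat (hx.trans_le hxy), sum_sub_distrib]
      ring
    simpa only [hsum, sub_zero] using tendsto_const_nhds.sub (tendsto_digamma_add_nat_sub hx hxy)

lemma hasDerivAt_digamma (hx : 0 < x) : HasDerivAt digamma (hurwitzSeries 2 x) x := by
  set x₀ := x / 2
  have hx₀ : 0 < x₀ := by positivity
  have hxt : x ∈ Ioi x₀ := show x / 2 < x by linarith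
  have hseries :
      HasDerivAt (fun y : ℝ => ∑' n : ℕ, ((x₀ + n)⁻¹ - (y + n)⁻¹)) (hurwitzSeries 2 x) x := by
    refine hasDerivAt_tsum_of_isPreconnected (g := fun (n : ℕ) (y : ℝ) => (x₀ + n)⁻¹ - (y + n)⁻¹)
      (g' := fun (n : ℕ) (y : ℝ) => ((y + n) ^ 2)⁻¹)
      (summable_inv_add_nat_pow hx₀ le_rfl) isOpen_Ioi isPreconnected_Ioi
      (fun n y hy => ?_) (fun n y hy => ?_) hxt (hasSum_digamma_sub hx₀ hxt.le).summable hxt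
    all_goals
      replace hy : x₀ < y := hy
      have hyn : 0 < y + n := by linarith [n.cast_nonneg (α := ℝ)]
    · convert (hasDerivAt_inv_add_pow 1 hyn.ne').const_sub ((x₀ + n)⁻¹) using 1 <;> simp
    · rw [norm_inv, norm_pow, Real.norm_of_nonneg hyn.le]
      gcongr
  refine (hseries.const_add (digamma x₀)).congr_of_eventuallyEq ?_
  filter_upwards [Ioi_mem_nhds hxt] with y (hy : x₀ < y)
  rw [(hasSum_digamma_sub hx₀ hy.le).tsum_eq]
  ring

lemma iteratedDeriv_digamma {m : ℕ} (hm : 1 ≤ m) (hx : 0 < x) :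
    iteratedDeriv m digamma x = (-1) ^ (m + 1) * m ! * hurwitzSeries (m + 1) x := by
  induction m, hm using Nat.le_induction generalizing x with
  | base => simp [(hasDerivAt_digamma hx).deriv]
  | succ m hm ih =>
    have heq : iteratedDeriv m digamma =ᶠ[𝓝 x]
        fun y => (-1) ^ (m + 1) * m ! * hurwitzSeries (m + 1) y := by
      filter_upwards [Ioi_mem_nhds hx] with y hy using ih hy
    rw [iteratedDeriv_succ, heq.deriv_eq,
      ((hasDerivAt_hurwitzSeries hx (by omega)).const_mul _).deriv, Nat.factorial_succ]
    push_cast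
    ring

end digamma

section bounds

variable {m : ℕ} {x : ℝ}

lemma abs_iteratedDeriv_digamma_le (hm : 1 ≤ m) (hx : 0 < x) :
    |iteratedDeriv m digamma x| ≤ m ! * ((x ^ (m + 1))⁻¹ + (x ^ m)⁻¹) := by
  rw [iteratedDeriv_digamma hm hx, abs_mul, abs_mul, abs_pow, abs_neg, abs_one, one_pow, one_mul,
    Nat.abs_cast, abs_of_nonneg (hurwitzSeries_nonneg hx)]
  gcongr
  simpa using hurwitzSeries_le hx (p := m + 1) (by omega)

lemma abs_iteratedDeriv_digamma_half_le (hm : 1 ≤ m) (hx : 1 ≤ x) :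
    |iteratedDeriv m digamma (x / 2)| ≤ 2 ^ (m + 2) * m ! * (x ^ m)⁻¹ := by
  have hxm : (x ^ (m + 1))⁻¹ ≤ (x ^ m)⁻¹ :=
    inv_anti₀ (by positivity) (pow_le_pow_right₀ hx m.le_succ)
  calc |iteratedDeriv m digamma (x / 2)|
      ≤ m ! * (((x / 2) ^ (m + 1))⁻¹ + ((x / 2) ^ m)⁻¹) :=
        abs_iteratedDeriv_digamma_le hm (by positivity)
    _ = m ! * (2 ^ (m + 1) * (x ^ (m + 1))⁻¹ + 2 ^ m * (x ^ m)⁻¹) := by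
        rw [div_pow, div_pow, inv_div, inv_div, div_eq_mul_inv, div_eq_mul_inv]
    _ ≤ m ! * (2 ^ (m + 1) * (x ^ m)⁻¹ + 2 ^ (m + 1) * (x ^ m)⁻¹) := by
        gcongr
        · norm_num
        · omega
    _ = 2 ^ (m + 2) * m ! * (x ^ m)⁻¹ := by ring

end bounds

theorem polygamma_sum_bound_general (a : ℝ) (ha : 0 < a) (k m : ℕ) (hm : 2 ≤ m) :
    |(1 / 2 ^ (m + 1)) * ∑ j ∈ Finset.Icc 1 k, iteratedDeriv m digamma (((j : ℝ) + a) / 2)|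
      ≤ 4 * (Nat.factorial m) / (a + 1) ^ (m - 1) := by
  have hterm (j : ℕ) (hj : j ∈ Icc 1 k) : |iteratedDeriv m digamma (((j : ℝ) + a) / 2)|
      ≤ 2 ^ (m + 2) * m ! * (((j : ℝ) + a) ^ m)⁻¹ := by
    have hj1 : (1 : ℝ) ≤ j := by exact_mod_cast (mem_Icc.1 hj).1
    exact abs_iteratedDeriv_digamma_half_le (by omega) (by linarith)
  have hsum : ∑ j ∈ Icc 1 k, (((j : ℝ) + a) ^ m)⁻¹ ≤ 2 * ((a + 1) ^ (m - 1))⁻¹ :=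
    calc ∑ j ∈ Icc 1 k, (((j : ℝ) + a) ^ m)⁻¹ = ∑ n ∈ range k, ((a + 1 + n) ^ m)⁻¹ := by
          rw [← Ico_add_one_right_eq_Icc, sum_Ico_eq_sum_range, Nat.add_sub_cancel]
          refine sum_congr rfl fun n _ => ?_
          push_cast
          ring
      _ ≤ hurwitzSeries m (a + 1) := sum_range_le_hurwitzSeries (by positivity) hm k
      _ ≤ 2 * ((a + 1) ^ (m - 1))⁻¹ := hurwitzSeries_le_of_one_le (by linarith) hm
  calc |(1 / 2 ^ (m + 1)) * ∑ j ∈ Icc 1 k, iteratedDeriv m digamma (((j : ℝ) + a) / 2)|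
      ≤ (1 / 2 ^ (m + 1)) * ∑ j ∈ Icc 1 k, 2 ^ (m + 2) * m ! * (((j : ℝ) + a) ^ m)⁻¹ := by
        rw [abs_mul, abs_of_pos (by positivity)]
        gcongr
        exact (abs_sum_le_sum_abs _ _).trans (sum_le_sum hterm)
    _ = 2 * m ! * ∑ j ∈ Icc 1 k, (((j : ℝ) + a) ^ m)⁻¹ := by
        rw [← mul_sum, pow_succ _ (m + 1)]
        field_simp
    _ ≤ 2 * m ! * (2 * ((a + 1) ^ (m - 1))⁻¹) := by gcongr
    _ = 4 * (Nat.factorial m) / (a + 1) ^ (m - 1) := by ring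

/-- Bound on sums of polygamma functions `ψ^(m) = iteratedDeriv m digamma`. -/
theorem polygamma_sum_bound (a : ℝ) (ha : 0 < a) (k m : ℕ) (hk : 2 ≤ k) (hm : 2 ≤ m) :
    |(1 / 2 ^ (m + 1)) * ∑ j ∈ Finset.Icc 1 k, iteratedDeriv m digamma (((j : ℝ) + a) / 2)|
      ≤ 4 * (Nat.factorial m) / (a + 1) ^ (m - 1) :=
  polygamma_sum_bound_general a ha k m hm
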